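/- arXiv:2102.00967 — 3 statements merged into one kernel-verified Lean document; each statement's English description precedes it below -/
import Mathlib

section
/- Let a < b be real numbers, let f : ℝ → ℝ be continuous, let u : ℝ × [a,b] → ℝ be such that the partial derivative ∂_t u exists and is jointly continuous, and let f^num_L, f^num_R : ℝ → ℝ be given functions of time with f^num_L(t) = f^num_R(t) for all t (periodic boundary conditions, where both boundary fluxes equal f^num(u_R, u_L)). Let V be a set of continuously differentiable functions v : [a,b] → ℝ containing the constant function 1, and assume that for every time t and every v ∈ V the weak-form equation ∫_a^b ∂_t u(t,x) v(x) dx − ∫_a^b f(u(t,x)) v'(x) dx + f^num_R(t) v(b) − f^num_L(t) v(a) = 0 holds. Then the total mass t ↦ ∫_a^b u(t,x) dx is constant in time. -/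
/-!
Testing the weak form against the constant `1 ∈ V` kills the flux integral (`v' = 0`) and, since
the two boundary fluxes coincide, the boundary term: the space integral of `∂ₜu` vanishes at
every time. Writing `u(s,x) - u(t,x) = ∫_t^s ∂ₜu(τ,x) dτ` and exchanging the two integrals
(Fubini on the compact rectangle where `∂ₜu` is continuous) shows that the mass does not change.
-/

open Set MeasureTheory intervalIntegral

variable {E : Type*} [NormedAddCommGroup E] [NormedSpace ℝ E]

theorem MeasureTheory.IntegrableOn.intervalIntegrable_intervalIntegral {F : ℝ → ℝ → E}
    {a b c d : ℝ} (h : IntegrableOn F.uncurry (uIoc a b ×ˢ uIoc c d)) :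
    IntervalIntegrable (fun y => ∫ x in a..b, F x y) volume c d := by
  have hprod : Integrable F.uncurry
      ((volume.restrict (uIoc a b)).prod (volume.restrict (uIoc c d))) := by
    rwa [Measure.prod_restrict, ← Measure.volume_eq_prod]
  rw [intervalIntegrable_iff]
  simp_rw [intervalIntegral_eq_integral_uIoc]
  exact hprod.integral_prod_right.smul _

/-- Unlike `intervalIntegral.integral_add`, no integrability of `g` is needed: if `g` is not
integrable, neither is `f`, and both sides are the junk value `0`. -/
theorem intervalIntegral.integral_eq_of_eq_add_of_integral_eq_zero {f g h : ℝ → E} {a b : ℝ}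
    (hfg : ∀ x ∈ uIcc a b, f x = g x + h x) (hh : IntervalIntegrable h volume a b)
    (hh0 : ∫ x in a..b, h x = 0) :
    ∫ x in a..b, f x = ∫ x in a..b, g x := by
  by_cases hg : IntervalIntegrable g volume a b
  · rw [integral_congr hfg, integral_add hg hh, hh0, add_zero]
  · have hf : ¬IntervalIntegrable f volume a b := fun hf =>
      hg ((hf.sub hh).congr fun x hx => by
        rw [hfg x (uIoc_subset_uIcc hx), add_sub_cancel_right])
    rw [integral_undef hf, integral_undef hg]

variable [CompleteSpace E]

theorem intervalIntegral.integral_eq_of_hasDerivAt_of_integral_eq_zero {u u' : ℝ → ℝ → E}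
    {a b s t : ℝ} (hu : ∀ τ ∈ uIcc t s, ∀ x ∈ uIcc a b, HasDerivAt (u · x) (u' τ x) τ)
    (hu' : ContinuousOn u'.uncurry (uIcc t s ×ˢ uIcc a b))
    (h0 : ∀ τ ∈ uIcc t s, ∫ x in a..b, u' τ x = 0) :
    ∫ x in a..b, u s x = ∫ x in a..b, u t x := by
  have hint : IntegrableOn u'.uncurry (uIoc t s ×ˢ uIoc a b) :=
    (hu'.integrableOn_compact (isCompact_uIcc.prod isCompact_uIcc)).mono_set
      (prod_mono uIoc_subset_uIcc uIoc_subset_uIcc)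
  have hftc : ∀ x ∈ uIcc a b, u s x = u t x + ∫ τ in t..s, u' τ x := fun x hx => by
    have hcont : ContinuousOn (u' · x) (uIcc t s) :=
      hu'.comp (continuousOn_id.prodMk continuousOn_const) fun τ hτ => ⟨hτ, hx⟩
    rw [integral_eq_sub_of_hasDerivAt (fun τ hτ => hu τ hτ x hx) hcont.intervalIntegrable,
      add_sub_cancel]
  refine integral_eq_of_eq_add_of_integral_eq_zero hftc hint.intervalIntegrable_intervalIntegral ?_
  rw [← intervalIntegral_intervalIntegral_swap hint, integral_congr h0, integral_zero]

theorem weak_RBF_conservation_periodic_general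
    (a b : ℝ) (hab : a < b)
    (f : ℝ → ℝ)
    (u ut : ℝ → ℝ → ℝ)
    (hut : ∀ t : ℝ, ∀ x ∈ Set.Icc a b, HasDerivAt (fun s => u s x) (ut t x) t)
    (hut_cont : ContinuousOn (fun p : ℝ × ℝ => ut p.1 p.2)
      (Set.univ ×ˢ Set.Icc a b))
    (fnumL fnumR : ℝ → ℝ)
    (hperiodic : ∀ t : ℝ, fnumL t = fnumR t)
    (V : Set (ℝ → ℝ))
    (hV1 : (fun _ => (1 : ℝ)) ∈ V)
    (hweak : ∀ t : ℝ, ∀ v ∈ V,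
      (∫ x in a..b, ut t x * v x)
        - (∫ x in a..b, f (u t x) * derivWithin v (Set.Icc a b) x)
        + fnumR t * v b - fnumL t * v a = 0) :
    ∀ s t : ℝ, (∫ x in a..b, u s x) = ∫ x in a..b, u t x := by
  have hmass_rate : ∀ t, ∫ x in a..b, ut t x = 0 := fun t => by
    simpa [hperiodic t] using hweak t _ hV1
  rw [← uIcc_of_le hab.le] at hut hut_cont
  intro s t
  exact integral_eq_of_hasDerivAt_of_integral_eq_zero (fun τ _ => hut τ)
    (hut_cont.mono (prod_mono (subset_univ _) subset_rfl)) fun τ _ => hmass_rate τ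

/-- **Conservation of the weak RBF method with periodic boundary conditions.**
If, in addition to the hypotheses of the conservation theorem, the two
numerical boundary fluxes coincide (`f^num_L = f^num_R`, as for periodic
boundary conditions), then the total mass `t ↦ ∫_a^b u(t,x) dx` is constant
in time. -/
theorem weak_RBF_conservation_periodic
    (a b : ℝ) (hab : a < b)
    (f : ℝ → ℝ) (hf : Continuous f)
    (u ut : ℝ → ℝ → ℝ)
    (hut : ∀ t : ℝ, ∀ x ∈ Set.Icc a b, HasDerivAt (fun s => u s x) (ut t x) t)
    (hut_cont : ContinuousOn (fun p : ℝ × ℝ => ut p.1 p.2)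
      (Set.univ ×ˢ Set.Icc a b))
    (fnumL fnumR : ℝ → ℝ)
    (hperiodic : ∀ t : ℝ, fnumL t = fnumR t)
    (V : Set (ℝ → ℝ))
    (hV1 : (fun _ => (1 : ℝ)) ∈ V)
    (hVsmooth : ∀ v ∈ V, ContDiffOn ℝ 1 v (Set.Icc a b))
    (hweak : ∀ t : ℝ, ∀ v ∈ V,
      (∫ x in a..b, ut t x * v x)
        - (∫ x in a..b, f (u t x) * derivWithin v (Set.Icc a b) x)
        + fnumR t * v b - fnumL t * v a = 0) :
    ∀ s t : ℝ, (∫ x in a..b, u s x) = ∫ x in a..b, u t x :=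
  weak_RBF_conservation_periodic_general a b hab f u ut hut hut_cont fnumL fnumR hperiodic V hV1
    hweak
end

section
/- Let a < b be real numbers, let f : ℝ → ℝ be continuous, let γ : ℝ → ℝ be differentiable with γ'(s) = f(s) for all s, and define the entropy flux F(s) := s·f(s) − γ(s). Let f^num : ℝ × ℝ → ℝ be an E-flux for f, i.e., for all p, q ∈ ℝ and all w with min(p,q) ≤ w ≤ max(p,q) one has (q − p)·(f^num(p,q) − f(w)) ≤ 0. Let u : [a,b] → ℝ be continuously differentiable, w : [a,b] → ℝ continuous, g_L, g_R ∈ ℝ boundary data, and set f^num_L := f^num(g_L, u(a)) and f^num_R := f^num(u(b), g_R). If ∫_a^b w(x) u(x) dx − ∫_a^b f(u(x)) u'(x) dx + f^num_R u(b) − f^num_L u(a) = 0, then 2∫_a^b w(x) u(x) dx ≤ −2(F(g_R) − F(g_L)) + 2 g_R (f(g_R) − f^num_R) − 2 g_L (f(g_L) − f^num_L). -/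
lemma mvt_aux (f γ : ℝ → ℝ) (hγ : ∀ s : ℝ, HasDerivAt γ (f s) s) (p q : ℝ) :
    ∃ c : ℝ, min p q ≤ c ∧ c ≤ max p q ∧ γ q - γ p = f c * (q - p) := by
  rcases lt_trichotomy p q with h | h | h
  · obtain ⟨c, hc, hceq⟩ := exists_hasDerivAt_eq_slope γ f h
      (fun x _ => (hγ x).continuousAt.continuousWithinAt)
      (fun x _ => hγ x)
    refine ⟨c, le_trans (min_le_left _ _) hc.1.le, le_trans hc.2.le (le_max_right _ _), ?_⟩
    rw [eq_div_iff (sub_ne_zero.2 h.ne')] at hceq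
    linarith [hceq]
  · exact ⟨p, min_le_left _ _, le_max_left _ _, by rw [h]; ring⟩
  · obtain ⟨c, hc, hceq⟩ := exists_hasDerivAt_eq_slope γ f h
      (fun x _ => (hγ x).continuousAt.continuousWithinAt)
      (fun x _ => hγ x)
    refine ⟨c, le_trans (min_le_right _ _) hc.1.le, le_trans hc.2.le (le_max_left _ _), ?_⟩
    rw [eq_div_iff (sub_ne_zero.2 h.ne')] at hceq
    linarith [hceq]

/-- **Energy stability of the weak RBF analytical method.**
With `γ' = f`, entropy flux `F(s) = s f(s) − γ(s)`, an E-flux `f^num`,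
boundary data `g_L, g_R`, and fluxes `f^num_L = f^num(g_L, u(a))`,
`f^num_R = f^num(u(b), g_R)`, the weak-form equation tested with `v = u`
implies
`2∫ w u ≤ −2(F(g_R) − F(g_L)) + 2 g_R (f(g_R) − f^num_R) − 2 g_L (f(g_L) − f^num_L)`. -/
theorem weak_RBF_energy_stability
    (a b : ℝ) (hab : a < b)
    (f : ℝ → ℝ) (hf : Continuous f)
    (γ : ℝ → ℝ) (hγ : ∀ s : ℝ, HasDerivAt γ (f s) s)
    (F : ℝ → ℝ) (hF : ∀ s : ℝ, F s = s * f s - γ s)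
    (fnum : ℝ → ℝ → ℝ)
    (hE : ∀ p q w : ℝ, min p q ≤ w → w ≤ max p q →
      (q - p) * (fnum p q - f w) ≤ 0)
    (u u' w : ℝ → ℝ)
    (hu : ∀ x ∈ Set.Icc a b, HasDerivWithinAt u (u' x) (Set.Icc a b) x)
    (hu' : ContinuousOn u' (Set.Icc a b))
    (hw : ContinuousOn w (Set.Icc a b))
    (gL gR : ℝ) (fnumL fnumR : ℝ)
    (hfnumL : fnumL = fnum gL (u a))
    (hfnumR : fnumR = fnum (u b) gR)
    (hweak : (∫ x in a..b, w x * u x) - (∫ x in a..b, f (u x) * u' x)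
      + fnumR * u b - fnumL * u a = 0) :
    2 * (∫ x in a..b, w x * u x)
      ≤ -2 * (F gR - F gL) + 2 * gR * (f gR - fnumR)
        - 2 * gL * (f gL - fnumL) := by
  have huc : ContinuousOn u (Set.Icc a b) := fun x hx => (hu x hx).continuousWithinAt
  have hIcc : Set.uIcc a b = Set.Icc a b := Set.uIcc_of_le hab.le
  -- FTC: ∫ f(u) u' = γ(u b) - γ(u a)
  have hFTC : (∫ x in a..b, f (u x) * u' x) = γ (u b) - γ (u a) := by
    have h1 : ∀ x ∈ Set.Icc a b, HasDerivWithinAt (γ ∘ u) (f (u x) * u' x) (Set.Icc a b) x :=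
      fun x hx => (hγ (u x)).comp_hasDerivWithinAt x (hu x hx)
    have hint : IntervalIntegrable (fun x => f (u x) * u' x) MeasureTheory.volume a b := by
      apply ContinuousOn.intervalIntegrable
      rw [hIcc]
      exact (hf.comp_continuousOn huc).mul hu'
    have hγc : Continuous γ := continuous_iff_continuousAt.mpr fun x => (hγ x).continuousAt
    have := intervalIntegral.integral_eq_sub_of_hasDeriv_right
      (f := γ ∘ u) (f' := fun x => f (u x) * u' x)
      (by rw [hIcc]; exact hγc.comp_continuousOn huc)
      (fun x hx => by
        rw [min_eq_left hab.le, max_eq_right hab.le] at hx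
        exact ((h1 x (Set.Ioo_subset_Icc_self hx)).hasDerivAt
          (Icc_mem_nhds hx.1 hx.2)).hasDerivWithinAt)
      hint
    simpa using this
  -- boundary inequalities from the E-flux property
  obtain ⟨cR, hcR1, hcR2, hcR⟩ := mvt_aux f γ hγ gR (u b)
  obtain ⟨cL, hcL1, hcL2, hcL⟩ := mvt_aux f γ hγ gL (u a)
  have hR : (gR - u b) * (fnum (u b) gR - f cR) ≤ 0 :=
    hE (u b) gR cR (by rwa [min_comm]) (by rwa [max_comm])
  have hL : (u a - gL) * (fnum gL (u a) - f cL) ≤ 0 := hE gL (u a) cL hcL1 hcL2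
  rw [hfnumR] at *
  rw [hfnumL] at *
  rw [hF gR, hF gL]
  nlinarith [hR, hL, hcR, hcL, hweak, hFTC]
end

section
/- Let a < b be real numbers, let f : ℝ → ℝ be continuous, and let γ : ℝ → ℝ be differentiable with γ'(s) = f(s) for all s. Let f^num : ℝ × ℝ → ℝ be an E-flux for f, i.e., for all p, q ∈ ℝ and all w with min(p,q) ≤ w ≤ max(p,q) one has (q − p)·(f^num(p,q) − f(w)) ≤ 0. Let u : [a,b] → ℝ be continuously differentiable, w : [a,b] → ℝ continuous, and set f^num_L = f^num_R := f^num(u(b), u(a)) (periodic boundary conditions). If ∫_a^b w(x) u(x) dx − ∫_a^b f(u(x)) u'(x) dx + f^num_R u(b) − f^num_L u(a) = 0, then ∫_a^b w(x) u(x) dx ≤ 0. -/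
/-- **Energy stability of the weak RBF analytical method with periodic BCs.**
With `γ' = f`, an E-flux `f^num`, and both numerical boundary fluxes equal to
`f^num(u(b), u(a))` (periodic boundary conditions), the weak-form equation
tested with `v = u` implies `∫ w u ≤ 0`. -/
theorem weak_RBF_energy_stability_periodic
    (a b : ℝ) (hab : a < b)
    (f : ℝ → ℝ) (hf : Continuous f)
    (γ : ℝ → ℝ) (hγ : ∀ s : ℝ, HasDerivAt γ (f s) s)
    (fnum : ℝ → ℝ → ℝ)
    (hE : ∀ p q w : ℝ, min p q ≤ w → w ≤ max p q →
      (q - p) * (fnum p q - f w) ≤ 0)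
    (u u' w : ℝ → ℝ)
    (hu : ∀ x ∈ Set.Icc a b, HasDerivWithinAt u (u' x) (Set.Icc a b) x)
    (hu' : ContinuousOn u' (Set.Icc a b))
    (hw : ContinuousOn w (Set.Icc a b))
    (fnumL fnumR : ℝ)
    (hfnumL : fnumL = fnum (u b) (u a))
    (hfnumR : fnumR = fnum (u b) (u a))
    (hweak : (∫ x in a..b, w x * u x) - (∫ x in a..b, f (u x) * u' x)
      + fnumR * u b - fnumL * u a = 0) :
    (∫ x in a..b, w x * u x) ≤ 0 := by
  have hucont : ContinuousOn u (Set.Icc a b) :=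
    fun x hx => (hu x hx).continuousWithinAt
  have hint : IntervalIntegrable (fun x => f (u x) * u' x) MeasureTheory.volume a b := by
    apply ContinuousOn.intervalIntegrable
    rw [Set.uIcc_of_le hab.le]
    exact (hf.comp_continuousOn hucont).mul hu'
  have hftc : (∫ x in a..b, f (u x) * u' x) = γ (u b) - γ (u a) := by
    apply intervalIntegral.integral_eq_sub_of_hasDeriv_right_of_le hab.le
    · have hγc : Continuous γ := continuous_iff_continuousAt.2 fun s => (hγ s).continuousAt
      exact hγc.comp_continuousOn hucont
    · intro x hx
      have hxI : Set.Icc a b ∈ nhds x :=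
        Icc_mem_nhds hx.1 hx.2
      have hda : HasDerivAt u (u' x) x :=
        (hu x (Set.Ioo_subset_Icc_self hx)).hasDerivAt hxI
      have : HasDerivAt (fun y => γ (u y)) (f (u x) * u' x) x :=
        (hγ (u x)).comp x hda
      exact this.hasDerivWithinAt
    · exact hint
  -- key inequality
  have hkey : γ (u b) - γ (u a) - fnum (u b) (u a) * (u b - u a) ≤ 0 := by
    rcases eq_or_ne (u a) (u b) with h | h
    · rw [h]; ring_nf; exact le_refl _
    · rcases h.lt_or_gt with hlt | hlt
      · obtain ⟨c, hc, hfc⟩ := exists_hasDerivAt_eq_slope γ f hlt ((continuous_iff_continuousAt.2 fun s => (hγ s).continuousAt).continuousOn) (fun x _ => hγ x)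
        have hEc := hE (u b) (u a) c
          (le_trans (min_le_right _ _) hc.1.le) (le_trans hc.2.le (le_max_left _ _))
        have hγeq : γ (u b) - γ (u a) = f c * (u b - u a) := by
          rw [hfc, div_mul_cancel₀ _ (sub_ne_zero.2 hlt.ne')]
        nlinarith [hEc]
      · obtain ⟨c, hc, hfc⟩ := exists_hasDerivAt_eq_slope γ f hlt ((continuous_iff_continuousAt.2 fun s => (hγ s).continuousAt).continuousOn) (fun x _ => hγ x)
        have hEc := hE (u b) (u a) c
          (le_trans (min_le_left _ _) hc.1.le) (le_trans hc.2.le (le_max_right _ _))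
        have hγeq : γ (u a) - γ (u b) = f c * (u a - u b) := by
          rw [hfc, div_mul_cancel₀ _ (sub_ne_zero.2 hlt.ne')]
        nlinarith [hEc]
  have : (∫ x in a..b, w x * u x)
      = γ (u b) - γ (u a) - fnum (u b) (u a) * (u b - u a) := by
    rw [hfnumL, hfnumR, hftc] at hweak; linarith
  linarith
end
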